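/- Let H be a complex algebraic group with identity component H⁰ reductive, satisfying: the finite group H/H⁰ acts on dominant weights of H⁰ (via representatives normalizing T₀ and B₀) preserving the dominance order. Suppose every irreducible H⁰-representation whose highest weight is H/H⁰-invariant extends to H. If V is an irreducible H⁰-submodule of the restriction to H⁰ of an H-module W such that the H-span of V is a direct sum of irreducible H⁰-modules with highest weights in the H/H⁰-orbit of the highest weight λ of V, and every element of this orbit is ≤ λ, then the H-span of V equals V; in particular V is the restriction of an H-module. -/

import Mathlib

/-!
STATEMENT 10 (the key step of Lemma 2.2 of the paper).  `H` is a complex algebraic group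
with reductive identity component `H⁰`; the finite group `H/H⁰` acts (through
representatives normalizing `T₀` and `B₀`) on the character lattice `Λ` of `T₀`,
preserving the dominance order (equivalently, nonnegative combinations of simple roots
`ΔH`).  `W` is an `H`-module, `V ⊆ W` an irreducible `H⁰`-submodule with highest weight
`λ`.  Assume (as in the paper, inside `V(χ)`):
* the `H`-span of `V` is a direct sum of irreducible `H⁰`-submodules whose highest
  weights lie in the `H/H⁰`-orbit of `λ`;
* every element of this orbit is `≤ λ`;
* `λ` occurs with multiplicity one, i.e. any constituent with highest weight `λ` is `V`
  itself (the extension property of irreducibles with invariant highest weight).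
Then the `H`-span of `V` equals `V`; in particular `V` is the restriction of an
`H`-module. -/

/-- `v` is a nonnegative integral combination of the elements of `Δ`. -/
def NNComb {Λ : Type*} [AddCommGroup Λ] (Δ : Finset Λ) (v : Λ) : Prop :=
  ∃ c : Λ → ℕ, v = ∑ β ∈ Δ, c β • β

/-- The `H`-span of a subspace `V` of a representation `ρ` of `H` on `W`: the smallest
`H`-invariant subspace containing `V`. -/
def HSpan {H W : Type*} [Group H] [AddCommGroup W] [Module ℂ W]
    (ρ : Representation ℂ H W) (V : Submodule ℂ W) : Submodule ℂ W :=
  sInf {U : Submodule ℂ W | V ≤ U ∧ ∀ h : H, ∀ w ∈ U, ρ h w ∈ U}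

lemma NNComb.zero {Λ : Type*} [AddCommGroup Λ] (Δ : Finset Λ) : NNComb Δ 0 :=
  ⟨0, by simp⟩

lemma NNComb.add {Λ : Type*} [AddCommGroup Λ] {Δ : Finset Λ} {v w : Λ}
    (hv : NNComb Δ v) (hw : NNComb Δ w) : NNComb Δ (v + w) := by
  obtain ⟨c, rfl⟩ := hv
  obtain ⟨d, rfl⟩ := hw
  exact ⟨c + d, by simp [add_smul, Finset.sum_add_distrib]⟩

lemma NNComb.sum {Λ α : Type*} [AddCommGroup Λ] {Δ : Finset Λ} (s : Finset α)
    (f : α → Λ) (h : ∀ a ∈ s, NNComb Δ (f a)) : NNComb Δ (∑ a ∈ s, f a) := by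
  classical
  induction s using Finset.induction_on with
  | empty => simpa using NNComb.zero Δ
  | insert _ _ hx ih =>
    rw [Finset.sum_insert hx]
    exact (h _ (Finset.mem_insert_self _ _)).add
      (ih fun a ha => h a (Finset.mem_insert_of_mem ha))

theorem stmt_10_aux {Λ : Type*} [AddCommGroup Λ]
    (ΔH : Finset Λ)
    -- the simple roots span a pointed cone (linear independence)
    (hanti : ∀ v : Λ, NNComb ΔH v → NNComb ΔH (-v) → v = 0)
    {H : Type*} [Group H] (H0 : Subgroup H) [H0.Normal] [Finite (H ⧸ H0)]
    -- the action of the finite group `H/H⁰` on the character lattice ...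
    (σ : (H ⧸ H0) →* AddMonoid.End Λ)
    -- ... preserves positivity, hence the dominance order
    (hmono : ∀ (q : H ⧸ H0) (v : Λ), NNComb ΔH v → NNComb ΔH (σ q v))
    {W : Type*} [AddCommGroup W] [Module ℂ W] (ρ : Representation ℂ H W)
    (V : Submodule ℂ W) (lam : Λ)
    -- `V` is an irreducible `H⁰`-submodule of `W` (of highest weight `λ`)
    (hVinv : ∀ h ∈ H0, ∀ v ∈ V, ρ h v ∈ V) (hVne : V ≠ ⊥)
    (hVirr : ∀ U ≤ V, (∀ h ∈ H0, ∀ v ∈ U, ρ h v ∈ U) → U = ⊥ ∨ U = V)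
    -- every element of the `H/H⁰`-orbit of `λ` is `≤ λ`
    (horb_le : ∀ q : H ⧸ H0, NNComb ΔH (lam - σ q lam))
    -- the `H`-span of `V` is a direct sum of irreducible `H⁰`-submodules `Vi` with
    -- highest weights `hw i` in the `H/H⁰`-orbit of `λ`
    {ι : Type*} [Finite ι] (Vi : ι → Submodule ℂ W) (hw : ι → Λ)
    (hVi_inv : ∀ i, ∀ h ∈ H0, ∀ v ∈ Vi i, ρ h v ∈ Vi i) (hVi_ne : ∀ i, Vi i ≠ ⊥)
    (hVi_irr : ∀ i, ∀ U ≤ Vi i, (∀ h ∈ H0, ∀ v ∈ U, ρ h v ∈ U) → U = ⊥ ∨ U = Vi i)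
    (hw_orbit : ∀ i, ∃ q : H ⧸ H0, hw i = σ q lam)
    (hsum : HSpan ρ V = iSup Vi) (hind : iSupIndep Vi)
    -- `λ` occurs with multiplicity one: the only constituent with highest weight `λ`
    -- is `V` itself
    (hmult : ∀ i, hw i = lam → Vi i = V) :
    HSpan ρ V = V := by
  classical
  -- Step 1: σ q lam = lam for all q.
  have hfix : ∀ q : H ⧸ H0, σ q lam = lam := by
    intro q
    have hn : 0 < orderOf q := (orderOf_pos q)
    set v : Λ := lam - σ q lam with hv
    -- telescoping sum
    have htel : ∑ k ∈ Finset.range (orderOf q), ((σ q)^k) (lam - σ q lam)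
        = lam - ((σ q)^(orderOf q)) lam := by
      have : ∀ k, ((σ q)^k) (lam - σ q lam) = ((σ q)^k) lam - ((σ q)^(k+1)) lam := by
        intro k
        rw [map_sub]
        congr 1
      simp_rw [this]
      exact Finset.sum_range_sub' (fun k => ((σ q)^k) lam) (orderOf q)
    have hone : ((σ q)^(orderOf q)) lam = lam := by
      rw [← map_pow, pow_orderOf_eq_one]
      simp
    have hsum0 : ∑ k ∈ Finset.range (orderOf q), ((σ q)^k) (lam - σ q lam) = 0 := by
      rw [htel, hone, sub_self]
    -- -v is a sum of the remaining NN terms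
    have hNNk : ∀ k, NNComb ΔH (((σ q)^k) (lam - σ q lam)) := by
      intro k
      have := hmono (q^k) (lam - σ q lam) (horb_le q)
      rwa [map_pow] at this
    have hneg : NNComb ΔH (-v) := by
      have h0 : Finset.range (orderOf q) = insert 0 (Finset.Ioo 0 (orderOf q)) := by
        ext k
        simp only [Finset.mem_range, Finset.mem_insert, Finset.mem_Ioo]
        omega
      have : v + ∑ k ∈ Finset.Ioo 0 (orderOf q), ((σ q)^k) (lam - σ q lam) = 0 := by
        have := hsum0
        rw [h0, Finset.sum_insert (by simp)] at this
        simpa [hv] using this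
      have hneg' : -v = ∑ k ∈ Finset.Ioo 0 (orderOf q), ((σ q)^k) (lam - σ q lam) := by
        rw [eq_neg_of_add_eq_zero_left this, neg_neg]
      rw [hneg']
      exact NNComb.sum _ _ fun k _ => hNNk k
    have := hanti v (horb_le q) hneg
    rw [hv, sub_eq_zero] at this
    exact this.symm
  -- Step 2: all Vi = V
  have hViV : ∀ i, Vi i = V := by
    intro i
    obtain ⟨q, hq⟩ := hw_orbit i
    exact hmult i (hq.trans (hfix q))
  -- Step 3
  have hVle : V ≤ HSpan ρ V := le_sInf fun U hU => hU.1
  cases isEmpty_or_nonempty ι with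
  | inl h =>
    exfalso
    apply hVne
    rw [← le_bot_iff]
    calc V ≤ HSpan ρ V := hVle
    _ = iSup Vi := hsum
    _ = ⊥ := by simp [iSup_of_empty]
  | inr h =>
    rw [hsum]
    apply le_antisymm
    · exact iSup_le fun i => (hViV i).le
    · obtain ⟨i⟩ := h
      exact (hViV i).ge.trans (le_iSup Vi i)

theorem stmt_10 {Λ : Type*} [AddCommGroup Λ]
    (ΔH : Finset Λ)
    -- the simple roots span a pointed cone (linear independence)
    (hanti : ∀ v : Λ, NNComb ΔH v → NNComb ΔH (-v) → v = 0)
    {H : Type*} [Group H] (H0 : Subgroup H) [H0.Normal] [Finite (H ⧸ H0)]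
    -- the action of the finite group `H/H⁰` on the character lattice ...
    (σ : (H ⧸ H0) →* Multiplicative (AddAut Λ))
    -- ... preserves positivity, hence the dominance order
    (hmono : ∀ (q : H ⧸ H0) (v : Λ), NNComb ΔH v → NNComb ΔH (Multiplicative.toAdd (σ q) v))
    {W : Type*} [AddCommGroup W] [Module ℂ W] (ρ : Representation ℂ H W)
    (V : Submodule ℂ W) (lam : Λ)
    -- `V` is an irreducible `H⁰`-submodule of `W` (of highest weight `λ`)
    (hVinv : ∀ h ∈ H0, ∀ v ∈ V, ρ h v ∈ V) (hVne : V ≠ ⊥)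
    (hVirr : ∀ U ≤ V, (∀ h ∈ H0, ∀ v ∈ U, ρ h v ∈ U) → U = ⊥ ∨ U = V)
    -- every element of the `H/H⁰`-orbit of `λ` is `≤ λ`
    (horb_le : ∀ q : H ⧸ H0, NNComb ΔH (lam - Multiplicative.toAdd (σ q) lam))
    -- the `H`-span of `V` is a direct sum of irreducible `H⁰`-submodules `Vi` with
    -- highest weights `hw i` in the `H/H⁰`-orbit of `λ`
    {ι : Type*} [Finite ι] (Vi : ι → Submodule ℂ W) (hw : ι → Λ)
    (hVi_inv : ∀ i, ∀ h ∈ H0, ∀ v ∈ Vi i, ρ h v ∈ Vi i) (hVi_ne : ∀ i, Vi i ≠ ⊥)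
    (hVi_irr : ∀ i, ∀ U ≤ Vi i, (∀ h ∈ H0, ∀ v ∈ U, ρ h v ∈ U) → U = ⊥ ∨ U = Vi i)
    (hw_orbit : ∀ i, ∃ q : H ⧸ H0, hw i = Multiplicative.toAdd (σ q) lam)
    (hsum : HSpan ρ V = iSup Vi) (hind : iSupIndep Vi)
    -- `λ` occurs with multiplicity one: the only constituent with highest weight `λ`
    -- is `V` itself
    (hmult : ∀ i, hw i = lam → Vi i = V) :
    HSpan ρ V = V := by
  exact stmt_10_aux ΔH hanti H0
    { toFun := fun q => (Multiplicative.toAdd (σ q)).toAddMonoidHom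
      map_one' := by ext x; simp [AddMonoid.End, map_one]; rfl
      map_mul' := fun a b => by ext x; simp [AddMonoid.End, map_mul]; rfl }
    hmono ρ V lam hVinv hVne hVirr horb_le Vi hw hVi_inv hVi_ne hVi_irr hw_orbit hsum hind hmult
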